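/- arXiv:1709.07910 — 2 statements merged into one kernel-verified Lean document; each statement's English description precedes it below -/
import Mathlib

section
/- Let φ(t) = Σ_{n≥1} a_n t^n/n! be a formal power series with real coefficients, V_n(x) = Σ_{k=0}^n B_{n,k}(a) x^k where B_{n,k}(a) are the partial Bell polynomials of the sequence (a_n), and f_n(x) = Σ_{k=0}^n B_{n,k}(a) (x)_k with (x)_k the falling factorial. Define V_{n,r}(x) by the generating function Σ_{n≥0} V_{n,r}(x) t^n/n! = (1+φ(t))^r exp(xφ(t)). Then V_{n,r}(x) = e^{-x} Σ_{j≥0} f_n(j+r) x^j/j!, and consequently: if V_n = V_{n,0} has only real zeros for all relevant x, then V_{n,r} has only real zeros. -/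
open PowerSeries

/-- A real polynomial has only real zeros: every complex root has imaginary part zero. -/
def RZ (p : Polynomial ℝ) : Prop :=
  ∀ z : ℂ, (p.map (algebraMap ℝ ℂ)).IsRoot z → z.im = 0

/-- The formal power series `φ(t) = ∑_{n ≥ 1} a_n t^n / n!`. -/
noncomputable def phiSeries (a : ℕ → ℝ) : PowerSeries ℝ :=
  PowerSeries.mk fun j => if j = 0 then 0 else a j / (j.factorial : ℝ)

/-- The partial Bell polynomial `B_{n,k}(a)`, defined by
`∑_{n ≥ k} B_{n,k}(a) t^n/n! = φ(t)^k / k!`. -/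
noncomputable def partialBell (a : ℕ → ℝ) (n k : ℕ) : ℝ :=
  (n.factorial : ℝ) * PowerSeries.coeff n ((phiSeries a) ^ k) / (k.factorial : ℝ)

/-- `f_n(y) = ∑_{k=0}^n B_{n,k}(a) (y)_k`, with `(y)_k` the falling factorial. -/
noncomputable def fEval (a : ℕ → ℝ) (n : ℕ) (y : ℝ) : ℝ :=
  ∑ k ∈ Finset.range (n + 1), partialBell a n k * (descPochhammer ℝ k).eval y

/-- The polynomial `V_{n,r}(x)`, defined by the generating function
`∑_n V_{n,r}(x) t^n/n! = (1 + φ(t))^r exp(x φ(t))`; its coefficient of `x^k` is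
`(n!/k!) · [t^n] ((1+φ)^r φ^k)`. In particular `V_{n,0} = V_n = ∑_k B_{n,k}(a) x^k`. -/
noncomputable def Vpoly (a : ℕ → ℝ) (r n : ℕ) : Polynomial ℝ :=
  ∑ k ∈ Finset.range (n + 1),
    Polynomial.C ((n.factorial : ℝ) / (k.factorial : ℝ) *
      PowerSeries.coeff n ((1 + phiSeries a) ^ r * (phiSeries a) ^ k)) * Polynomial.X ^ k

/-!
For a natural number `N`, the binomial theorem gives `f_n(N) = n! [t^n] (1 + φ)^N`; expanding
`(1 + φ)^(j + r) = (1 + φ)^r (1 + φ)^j` in powers of `φ` turns this into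
`f_n(j + r) = ∑_k c_k (j)_k`, where `c_k` are the coefficients of `V_{n,r}`. Since
`∑_j (j)_k x^j / j! = x^k e^x`, the umbral evaluation is `e^x V_{n,r}(x)`.

From `(1 + φ)^(r+1) φ^k = (1 + φ)^r φ^k + (1 + φ)^r φ^(k+1)` one gets
`V_{n,r+1} = V_{n,r} + V_{n,r}'`, and `p ↦ p + p'` preserves real-rootedness.
-/

namespace PowerSeries

variable {R : Type*} [CommSemiring R] {φ : R⟦X⟧}

theorem coeff_mul_pow_eq_zero_of_lt (hφ : constantCoeff φ = 0) (ψ : R⟦X⟧) {n k : ℕ}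
    (h : n < k) : coeff n (ψ * φ ^ k) = 0 := by
  have hX : X ^ k ∣ ψ * φ ^ k :=
    dvd_mul_of_dvd_right (pow_dvd_pow_of_dvd (X_dvd_iff.mpr hφ) k) ψ
  exact X_pow_dvd_iff.mp hX n h

theorem coeff_mul_one_add_pow (hφ : constantCoeff φ = 0) (ψ : R⟦X⟧) (n N : ℕ) :
    coeff n (ψ * (1 + φ) ^ N) =
      ∑ k ∈ Finset.range (n + 1), (N.choose k : R) * coeff n (ψ * φ ^ k) := by
  have hbinom : ψ * (1 + φ) ^ N =
      ∑ k ∈ Finset.range (N + 1), (N.choose k : R⟦X⟧) * (ψ * φ ^ k) := by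
    rw [add_comm, add_pow, Finset.mul_sum]
    refine Finset.sum_congr rfl fun k _ => ?_
    ring
  have hcoeff (k : ℕ) :
      coeff n ((N.choose k : R⟦X⟧) * (ψ * φ ^ k)) = N.choose k * coeff n (ψ * φ ^ k) := by
    rw [← map_natCast (C (R := R)), coeff_C_mul]
  have hN : ∑ k ∈ Finset.range (N + 1), (N.choose k : R) * coeff n (ψ * φ ^ k)
      = ∑ k ∈ Finset.range (n + N + 1), (N.choose k : R) * coeff n (ψ * φ ^ k) := by
    refine Finset.sum_subset (Finset.range_subset_range.2 (by omega)) fun k _ hk => ?_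
    rw [Nat.choose_eq_zero_of_lt (by simpa using hk), Nat.cast_zero, zero_mul]
  have hn : ∑ k ∈ Finset.range (n + 1), (N.choose k : R) * coeff n (ψ * φ ^ k)
      = ∑ k ∈ Finset.range (n + N + 1), (N.choose k : R) * coeff n (ψ * φ ^ k) := by
    refine Finset.sum_subset (Finset.range_subset_range.2 (by omega)) fun k _ hk => ?_
    rw [coeff_mul_pow_eq_zero_of_lt hφ ψ (by simpa using hk), mul_zero]
  rw [hbinom, map_sum, Finset.sum_congr rfl fun k _ => hcoeff k, hN, hn]

end PowerSeries

open Polynomial in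
/-- At a zero `z` of `q + c q'` with `q z ≠ 0`, the logarithmic derivative `∑ 1 / (z - ρ)`
equals `-1 / c`, which is real; with all roots `ρ` real its imaginary part is
`-Im z ∑ |z - ρ|⁻²`. -/
theorem RZ.add_smul_derivative {p : ℝ[X]} (hp : RZ p) (c : ℝ) :
    RZ (p + c • derivative p) := by
  intro z hz
  set q := p.map (algebraMap ℝ ℂ)
  by_cases hqz : q.eval z = 0
  · exact hp z hqz
  set S := (q.roots.map fun ρ => 1 / (z - ρ)).sum
  have hcS : (c : ℂ) * S = -1 := by
    have h0 : q.eval z + c * (derivative q).eval z = 0 := by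
      simpa [q, IsRoot, Polynomial.map_add, derivative_map, Polynomial.smul_eq_C_mul] using hz
    rw [(IsAlgClosed.splits q).eval_derivative_eq_eval_mul_sum hqz] at h0
    have h1 : q.eval z * (1 + c * S) = 0 := by linear_combination h0
    linear_combination (mul_eq_zero.1 h1).resolve_left hqz
  have hroots : q.roots ≠ 0 := by
    rintro h
    simp [S, h] at hcS
  have hS_im : S.im = 0 := by
    have hc : (c : ℂ) ≠ 0 := by
      rintro h
      simp [h] at hcS
    have h1 := congrArg Complex.im hcS
    rw [Complex.mul_im, Complex.ofReal_re, Complex.ofReal_im, zero_mul, add_zero, Complex.neg_im,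
      Complex.one_im, neg_zero] at h1
    exact (mul_eq_zero.1 h1).resolve_left (by exact_mod_cast hc)
  have hS_im_eq : S.im = -z.im * (q.roots.map fun ρ => (Complex.normSq (z - ρ))⁻¹).sum := by
    change Complex.imAddGroupHom S = _
    rw [map_multiset_sum, Multiset.map_map, ← Multiset.sum_map_mul_left]
    refine congrArg Multiset.sum (Multiset.map_congr rfl fun ρ hρ => ?_)
    have hρ_real : ρ.im = 0 := hp ρ (isRoot_of_mem_roots hρ)
    simp [Complex.inv_im, hρ_real, div_eq_mul_inv]
  have hsum_pos : 0 < (q.roots.map fun ρ => (Complex.normSq (z - ρ))⁻¹).sum := by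
    have hpos : ∀ ρ ∈ q.roots, (0 : ℝ) < (Complex.normSq (z - ρ))⁻¹ := by
      refine fun ρ hρ => inv_pos.2 (Complex.normSq_pos.2 (sub_ne_zero.2 ?_))
      rintro rfl
      exact hqz (isRoot_of_mem_roots hρ)
    simpa using Multiset.sum_lt_sum_of_nonempty hroots hpos
  rw [hS_im_eq, neg_mul, neg_eq_zero] at hS_im
  exact (mul_eq_zero.1 hS_im).resolve_right hsum_pos.ne'

theorem hasSum_descFactorial_mul_pow_div_factorial (x : ℝ) (k : ℕ) :
    HasSum (fun j : ℕ => (j.descFactorial k : ℝ) * x ^ j / j.factorial)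
      (x ^ k * Real.exp x) := by
  have hshift : (fun m : ℕ => ((m + k).descFactorial k : ℝ) * x ^ (m + k) / (m + k).factorial)
      = fun m : ℕ => x ^ k * (x ^ m / m.factorial) := by
    funext m
    have h := Nat.factorial_mul_descFactorial (Nat.le_add_left k m)
    rw [Nat.add_sub_cancel] at h
    rw [← h, Nat.cast_mul]
    have hd : ((m + k).descFactorial k : ℝ) ≠ 0 := by
      exact_mod_cast (Nat.descFactorial_pos.2 (Nat.le_add_left k m)).ne'
    field_simp
    ring
  rw [← hasSum_nat_add_iff' k, hshift, Finset.sum_eq_zero fun i hi => by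
    rw [Nat.descFactorial_eq_zero_iff_lt.2 (Finset.mem_range.1 hi), Nat.cast_zero, zero_mul,
      zero_div], sub_zero]
  exact (Real.exp_eq_exp_ℝ ▸ NormedSpace.expSeries_div_hasSum_exp x).mul_left _

theorem hasSum_sum_mul_descFactorial_mul_pow_div_factorial (x : ℝ) (s : Finset ℕ)
    (c : ℕ → ℝ) :
    HasSum (fun j : ℕ => (∑ k ∈ s, c k * j.descFactorial k) * x ^ j / j.factorial)
      (Real.exp x * ∑ k ∈ s, c k * x ^ k) := by
  have hterm (j : ℕ) : (∑ k ∈ s, c k * j.descFactorial k) * x ^ j / j.factorial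
      = ∑ k ∈ s, c k * ((j.descFactorial k : ℝ) * x ^ j / j.factorial) := by
    rw [Finset.sum_mul, Finset.sum_div]
    exact Finset.sum_congr rfl fun k _ => by ring
  have hvalue :
      Real.exp x * ∑ k ∈ s, c k * x ^ k = ∑ k ∈ s, c k * (x ^ k * Real.exp x) := by
    rw [Finset.mul_sum]
    exact Finset.sum_congr rfl fun k _ => by ring
  simp_rw [hterm, hvalue]
  exact hasSum_sum fun k _ => (hasSum_descFactorial_mul_pow_div_factorial x k).mul_left (c k)

theorem constantCoeff_phiSeries (a : ℕ → ℝ) : constantCoeff (phiSeries a) = 0 := by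
  simp [phiSeries]

theorem Vpoly_coeff (a : ℕ → ℝ) (r n k : ℕ) :
    (Vpoly a r n).coeff k = (n.factorial : ℝ) / (k.factorial : ℝ) *
      coeff n ((1 + phiSeries a) ^ r * phiSeries a ^ k) := by
  rw [Vpoly, Polynomial.finsetSum_coeff]
  simp only [Polynomial.coeff_C_mul_X_pow]
  rw [Finset.sum_ite_eq]
  split_ifs with hk
  · rfl
  · have hnk : n < k := by simpa using hk
    rw [coeff_mul_pow_eq_zero_of_lt (constantCoeff_phiSeries a) _ hnk, mul_zero]

theorem Vpoly_eval_eq_sum_range (a : ℕ → ℝ) (r n : ℕ) (x : ℝ) :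
    (Vpoly a r n).eval x = ∑ k ∈ Finset.range (n + 1), (Vpoly a r n).coeff k * x ^ k := by
  conv_lhs => rw [Vpoly]
  rw [Polynomial.eval_finsetSum]
  refine Finset.sum_congr rfl fun k _ => ?_
  rw [Vpoly_coeff, Polynomial.eval_mul, Polynomial.eval_C, Polynomial.eval_pow, Polynomial.eval_X]

theorem Vpoly_succ (a : ℕ → ℝ) (r n : ℕ) :
    Vpoly a (r + 1) n = Vpoly a r n + Polynomial.derivative (Vpoly a r n) := by
  ext k
  have hsplit : (1 + phiSeries a) ^ (r + 1) * phiSeries a ^ k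
      = (1 + phiSeries a) ^ r * phiSeries a ^ k
        + (1 + phiSeries a) ^ r * phiSeries a ^ (k + 1) := by
    ring
  rw [Polynomial.coeff_add, Polynomial.coeff_derivative, Vpoly_coeff, Vpoly_coeff, Vpoly_coeff,
    hsplit, map_add, Nat.factorial_succ]
  push_cast
  field_simp

theorem fEval_natCast (a : ℕ → ℝ) (n N : ℕ) :
    fEval a n N = n.factorial * coeff n ((1 + phiSeries a) ^ N) := by
  rw [fEval, ← one_mul ((1 + phiSeries a) ^ N),
    coeff_mul_one_add_pow (constantCoeff_phiSeries a), Finset.mul_sum]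
  refine Finset.sum_congr rfl fun k _ => ?_
  rw [descPochhammer_eval_eq_descFactorial, Nat.descFactorial_eq_factorial_mul_choose, partialBell,
    one_mul]
  push_cast
  field_simp

theorem fEval_natCast_add (a : ℕ → ℝ) (n r j : ℕ) :
    fEval a n ((j : ℝ) + r) =
      ∑ k ∈ Finset.range (n + 1), (Vpoly a r n).coeff k * j.descFactorial k := by
  rw [← Nat.cast_add, fEval_natCast, add_comm j r, pow_add,
    coeff_mul_one_add_pow (constantCoeff_phiSeries a), Finset.mul_sum]
  refine Finset.sum_congr rfl fun k _ => ?_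
  rw [Vpoly_coeff, Nat.descFactorial_eq_factorial_mul_choose]
  push_cast
  field_simp

theorem hasSum_fEval_natCast_add (a : ℕ → ℝ) (n r : ℕ) (x : ℝ) :
    HasSum (fun j : ℕ => fEval a n ((j : ℝ) + r) * x ^ j / j.factorial)
      (Real.exp x * (Vpoly a r n).eval x) := by
  simp_rw [fEval_natCast_add, Vpoly_eval_eq_sum_range]
  exact hasSum_sum_mul_descFactorial_mul_pow_div_factorial x _ _

theorem RZ_Vpoly_of_RZ_Vpoly_zero (a : ℕ → ℝ) (n r : ℕ) (h : RZ (Vpoly a 0 n)) :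
    RZ (Vpoly a r n) := by
  induction r with
  | zero => exact h
  | succ r ih => simpa [Vpoly_succ] using ih.add_smul_derivative 1

/-- `V_{n,r}(x) = e^{-x} ∑_{j ≥ 0} f_n(j + r) x^j / j!` (the umbral evaluation
`f_n(B_x + r)`), and consequently if `V_n = V_{n,0}` has only real zeros then so does
`V_{n,r}`. -/
theorem Vpoly_umbral_and_real_rooted (a : ℕ → ℝ) (n r : ℕ) :
    (∀ x : ℝ, (Vpoly a r n).eval x =
        Real.exp (-x) * ∑' j : ℕ, fEval a n ((j : ℝ) + r) * x ^ j / (j.factorial : ℝ)) ∧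
      (RZ (Vpoly a 0 n) → RZ (Vpoly a r n)) := by
  refine ⟨fun x => ?_, RZ_Vpoly_of_RZ_Vpoly_zero a n r⟩
  rw [(hasSum_fEval_natCast_add a n r x).tsum_eq, ← mul_assoc, ← Real.exp_add, neg_add_cancel,
    Real.exp_zero, one_mul]
end

section
/- For natural numbers n and r with r ≤ n, the polynomial g_n^{(r)}(x) = Σ_{k=r}^n C(n,k) L(k,r) L_{n−k}(x) has only real zeros, where L(k,r) are the Lah numbers and L_m(x) the Lah polynomials; moreover Σ_{n≥0} g_n^{(r)}(x) t^n/n! = (1/r!)(t/(1−t))^r exp(xt/(1−t)). -/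
/-- The Lah number `L(n,k) = (n!/k!) C(n−1,k−1)`. -/
def lahNum : ℕ → ℕ → ℕ
  | 0, 0 => 1
  | 0, _ + 1 => 0
  | _ + 1, 0 => 0
  | n + 1, k + 1 => ((n + 1).factorial / (k + 1).factorial) * n.choose k

/-- The Lah polynomial `L_m(x) = ∑_j L(m,j) x^j`. -/
noncomputable def lahPoly (m : ℕ) : Polynomial ℝ :=
  ∑ j ∈ Finset.range (m + 1), Polynomial.C (lahNum m j : ℝ) * Polynomial.X ^ j

/-- `g_n^{(r)}(x) = ∑_{k=r}^n C(n,k) L(k,r) L_{n−k}(x)`. -/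
noncomputable def gPoly (n r : ℕ) : Polynomial ℝ :=
  ∑ k ∈ Finset.Icc r n,
    Polynomial.C ((n.choose k : ℝ) * (lahNum k r : ℝ)) * lahPoly (n - k)

/-- The formal power series `t/(1−t) = ∑_{j ≥ 1} t^j`. -/
noncomputable def tDivOneSubT : PowerSeries ℝ :=
  PowerSeries.mk fun j => if j = 0 then 0 else 1

/-!
The Lah numbers have exponential generating function `(t/(1-t))^r / r!`, so the binomial
convolution of the `r`-th and `j`-th columns is `C(r+j, r)` times the `(r+j)`-th column. Read
coefficientwise this says `g_n^{(r)} = L_n^{(r)} / r!`, and read with the Lah polynomials in place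
of the second column it is the generating function identity.

For real-rootedness, `L_{n+1} = x L_n' + (x + n) L_n`. At a non-real zero `z` of `L_{n+1}` with
`L_n(z) ≠ 0` this gives `L_n'(z)/L_n(z) = -1 - n/z`, whose imaginary part has the sign of `Im z`,
whereas each term `1/(z - w)` of the logarithmic derivative over the real roots `w` of `L_n` has
the opposite sign. Real-rootedness passes to derivatives by the Gauss–Lucas theorem.
-/

open Polynomial
open scoped Nat

namespace RZ

variable {p : ℝ[X]}

theorem C_mul (hp : RZ p) {c : ℝ} (hc : c ≠ 0) : RZ (C c * p) := fun z hz =>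
  hp z <| by simpa [Polynomial.map_mul, hc] using hz

theorem derivative (hp : RZ p) (hdeg : 0 < p.natDegree) : RZ (derivative p) := by
  intro z hz
  set P := p.map (algebraMap ℝ ℂ)
  have hP : 0 < P.degree := by
    rwa [degree_map, ← natDegree_pos_iff_degree_pos]
  have hzP : z ∈ P.derivative.rootSet ℂ := by
    rw [mem_rootSet, coe_aeval_eq_eval]
    refine ⟨?_, by simpa [P, derivative_map] using hz⟩
    rw [Ne, derivative_eq_zero, natDegree_map]
    exact hdeg.ne'
  have hreal : P.rootSet ℂ ⊆ {w : ℂ | w.im = 0} := fun w hw =>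
    hp w ((mem_rootSet.mp hw).2)
  exact convexHull_min hreal (convex_hyperplane Complex.imLm.isLinear 0)
    (rootSet_derivative_subset_convexHull_rootSet hP hzP)

theorem iterate_derivative (hp : RZ p) {k : ℕ} (hk : k ≤ p.natDegree) :
    RZ (Polynomial.derivative^[k] p) := by
  induction k generalizing p with
  | zero => exact hp
  | succ k ih =>
    rw [Function.iterate_succ_apply]
    exact ih (hp.derivative (by omega)) (by rw [natDegree_derivative]; omega)

theorem im_mul_im_logDeriv_nonpos (hp : RZ p) {z : ℂ}
    (hz : (p.map (algebraMap ℝ ℂ)).eval z ≠ 0) :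
    z.im * ((p.map (algebraMap ℝ ℂ)).derivative.eval z / (p.map (algebraMap ℝ ℂ)).eval z).im
      ≤ 0 := by
  have im_sum (s : Multiset ℂ) : s.sum.im = (s.map Complex.im).sum :=
    map_multiset_sum Complex.imAddGroupHom s
  rw [(IsAlgClosed.splits _).eval_derivative_div_eval_of_ne_zero hz, ← neg_nonneg, im_sum,
    Multiset.map_map, ← Multiset.sum_map_mul_left, ← Multiset.sum_map_neg]
  refine Multiset.sum_nonneg fun t ht => ?_
  obtain ⟨w, hw, rfl⟩ := Multiset.mem_map.mp ht
  have hw_im : w.im = 0 := hp w (isRoot_of_mem_roots hw)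
  simp only [Function.comp_apply, one_div, Complex.inv_im, Complex.sub_im, hw_im, sub_zero]
  rw [neg_div, mul_neg, neg_neg, ← mul_div_assoc]
  exact div_nonneg (mul_self_nonneg _) (Complex.normSq_nonneg _)

theorem X_mul_derivative_add (hp : RZ p) {c : ℝ} (hc : 0 < c) :
    RZ (X * Polynomial.derivative p + (X + C c) * p) := by
  intro z hz
  set P := p.map (algebraMap ℝ ℂ)
  by_contra him
  have hPz : P.eval z ≠ 0 := fun h => him (hp z h)
  have hz0 : z ≠ 0 := by rintro rfl; exact him rfl
  have hlog : P.derivative.eval z / P.eval z = -1 - c / z := by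
    simp only [IsRoot, Polynomial.map_add, Polynomial.map_mul, ← derivative_map, map_X, map_C,
      eval_add, eval_mul, eval_X, eval_C] at hz
    field_simp
    linear_combination hz
  have hlog_im : z.im * (-1 - c / z).im = c * (z.im * z.im) / Complex.normSq z := by
    simp only [Complex.sub_im, Complex.neg_im, Complex.one_im, Complex.div_im, Complex.ofReal_re,
      Complex.ofReal_im]
    ring
  have key := hp.im_mul_im_logDeriv_nonpos hPz
  rw [hlog, hlog_im] at key
  exact key.not_gt (div_pos (mul_pos hc (mul_self_pos.2 him)) (Complex.normSq_pos.2 hz0))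

end RZ

section LahNumbers

theorem lahNum_eq_zero_of_lt : ∀ {n k : ℕ}, n < k → lahNum n k = 0
  | 0, _ + 1, _ => rfl
  | n + 1, k + 1, h => by
    rw [lahNum, Nat.choose_eq_zero_of_lt (by omega), mul_zero]

theorem lahNum_zero_right (n : ℕ) : lahNum n 0 = if n = 0 then 1 else 0 := by
  cases n <;> rfl

theorem lahNum_self (n : ℕ) : lahNum n n = 1 := by
  cases n with
  | zero => rfl
  | succ n => rw [lahNum, Nat.div_self (Nat.factorial_pos _), Nat.choose_self]

theorem factorial_mul_lahNum_succ_succ (n k : ℕ) :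
    (k + 1)! * lahNum (n + 1) (k + 1) = (n + 1)! * n.choose k := by
  rcases le_or_gt k n with h | h
  · rw [lahNum, ← mul_assoc, Nat.mul_div_cancel' (Nat.factorial_dvd_factorial (by omega))]
  · rw [lahNum, Nat.choose_eq_zero_of_lt h, mul_zero, mul_zero, mul_zero]

theorem lahNum_succ_succ (n k : ℕ) :
    lahNum (n + 1) (k + 1) = lahNum n k + (n + k + 1) * lahNum n (k + 1) := by
  rcases n with _ | m
  · rcases k with _ | k <;> rfl
  rcases k with _ | j
  · have h (n : ℕ) : lahNum (n + 1) 1 = (n + 1)! := by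
      simpa using factorial_mul_lahNum_succ_succ n 0
    rw [h, h, lahNum_zero_right, if_neg m.succ_ne_zero, Nat.factorial_succ (m + 1)]
    ring
  -- times `(j + 2)!` every Lah number here is a factorial times a binomial coefficient, and the
  -- identity reduces to Pascal's rule and `(m + 1) C(m, j) = (j + 1) C(m + 1, j + 1)`
  refine Nat.eq_of_mul_eq_mul_left (Nat.factorial_pos (j + 1 + 1)) ?_
  have h1 := factorial_mul_lahNum_succ_succ (m + 1) (j + 1)
  have h2 := factorial_mul_lahNum_succ_succ m j
  have h3 := factorial_mul_lahNum_succ_succ m (j + 1)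
  have h4 := Nat.add_one_mul_choose_eq m j
  rw [Nat.choose_succ_succ] at h1 h4
  rw [Nat.factorial_succ (j + 1)] at h1 h3 ⊢
  rw [Nat.factorial_succ (m + 1)] at h1
  zify at h1 h2 h3 h4 ⊢
  linear_combination h1 - (j + 2 : ℤ) * h2 - (m + j + 3 : ℤ) * h3 + ((m + 1)! : ℤ) * h4

end LahNumbers

section LahPolynomials

theorem lahPoly_coeff (m j : ℕ) : (lahPoly m).coeff j = lahNum m j := by
  rw [lahPoly, finsetSum_coeff]
  simp only [coeff_C_mul, coeff_X_pow, mul_ite, mul_one, mul_zero, Finset.sum_ite_eq,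
    Finset.mem_range]
  split_ifs with h
  · rfl
  · rw [lahNum_eq_zero_of_lt (by omega), Nat.cast_zero]

theorem lahPoly_natDegree (n : ℕ) : (lahPoly n).natDegree = n :=
  natDegree_eq_of_le_of_coeff_ne_zero
    (natDegree_le_iff_coeff_eq_zero.mpr fun _ hm => by
      rw [lahPoly_coeff, lahNum_eq_zero_of_lt (by exact_mod_cast hm), Nat.cast_zero])
    (by rw [lahPoly_coeff, lahNum_self, Nat.cast_one]; exact one_ne_zero)

theorem lahPoly_zero : lahPoly 0 = 1 := by
  simp [lahPoly, lahNum]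

theorem lahPoly_succ (n : ℕ) :
    lahPoly (n + 1) = X * derivative (lahPoly n) + (X + C (n : ℝ)) * lahPoly n := by
  ext (_ | k)
  · simp +contextual [lahPoly_coeff, lahNum_zero_right]
  · rw [coeff_add, coeff_X_mul, coeff_derivative, add_mul, coeff_add, coeff_X_mul, coeff_C_mul]
    simp only [lahPoly_coeff, lahNum_succ_succ]
    push_cast
    ring

theorem RZ_lahPoly (n : ℕ) : RZ (lahPoly n) := by
  rcases n with _ | n
  · intro z hz
    simp [lahPoly_zero] at hz
  induction n with
  | zero =>
    intro z hz
    simp_all [lahPoly_succ, lahPoly_zero]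
  | succ n ih =>
    rw [lahPoly_succ]
    exact_mod_cast ih.X_mul_derivative_add n.cast_add_one_pos

end LahPolynomials

section ExponentialGeneratingFunctions

noncomputable def egf (a : ℕ → ℝ) : PowerSeries ℝ :=
  PowerSeries.mk fun n => a n / n !

theorem coeff_egf (a : ℕ → ℝ) (n : ℕ) : PowerSeries.coeff n (egf a) = a n / n ! :=
  PowerSeries.coeff_mk _ _

theorem egf_injective : Function.Injective egf := fun a b h => funext fun n => by
  have := congrArg (PowerSeries.coeff n) h
  rwa [coeff_egf, coeff_egf, div_left_inj' (by positivity)] at this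

theorem C_mul_egf (c : ℝ) (a : ℕ → ℝ) : PowerSeries.C c * egf a = egf fun n => c * a n := by
  ext n
  rw [PowerSeries.coeff_C_mul, coeff_egf, coeff_egf, mul_div_assoc]

theorem egf_mul (a b : ℕ → ℝ) :
    egf a * egf b = egf fun n => ∑ k ∈ Finset.range (n + 1), n.choose k * a k * b (n - k) := by
  ext n
  rw [PowerSeries.coeff_mul, Finset.Nat.sum_antidiagonal_eq_sum_range_succ_mk, coeff_egf,
    Finset.sum_div]
  refine Finset.sum_congr rfl fun k hk => ?_
  have hk : k ≤ n := Nat.lt_succ_iff.mp (Finset.mem_range.mp hk)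
  rw [coeff_egf, coeff_egf, Nat.cast_choose ℝ hk]
  field_simp

theorem tDivOneSubT_eq_X_mul_mk_one : tDivOneSubT = PowerSeries.X * PowerSeries.mk 1 := by
  ext n
  rcases n with _ | n <;> simp [tDivOneSubT, PowerSeries.coeff_succ_X_mul]

theorem egf_lahNum (r : ℕ) :
    egf (fun k => lahNum k r) = PowerSeries.C (1 / r ! : ℝ) * tDivOneSubT ^ r := by
  ext k
  rcases r with _ | d
  · rcases k with _ | k <;> simp [coeff_egf, lahNum_zero_right, PowerSeries.coeff_one]
  rw [tDivOneSubT_eq_X_mul_mk_one, mul_pow, PowerSeries.mk_one_pow_eq_mk_choose_add,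
    PowerSeries.coeff_C_mul, PowerSeries.coeff_X_pow_mul', coeff_egf]
  split_ifs with h
  · obtain ⟨i, rfl⟩ : ∃ i, k = i + 1 := ⟨k - 1, by omega⟩
    have := factorial_mul_lahNum_succ_succ i d
    rw [PowerSeries.coeff_mk, show d + (i + 1 - (d + 1)) = i by omega]
    field_simp
    exact_mod_cast (mul_comm _ _).trans this
  · rw [lahNum_eq_zero_of_lt (by omega)]
    simp

theorem lahNum_convolution (n r j : ℕ) :
    ∑ k ∈ Finset.range (n + 1), n.choose k * lahNum k r * lahNum (n - k) j
      = (r + j).choose r * lahNum n (r + j) := by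
  have key :
      egf (fun n => ∑ k ∈ Finset.range (n + 1), n.choose k * lahNum k r * lahNum (n - k) j)
        = egf (fun n => (r + j).choose r * lahNum n (r + j)) := calc
    _ = egf (fun k => lahNum k r) * egf (fun k => lahNum k j) := by
      rw [egf_mul]
    _ = PowerSeries.C ((r + j).choose r : ℝ) * egf (fun k => lahNum k (r + j)) := by
      rw [egf_lahNum, egf_lahNum, egf_lahNum, pow_add, Nat.cast_choose ℝ (Nat.le_add_right r j),
        Nat.add_sub_cancel_left, mul_mul_mul_comm, ← map_mul, ← mul_assoc _ (PowerSeries.C _),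
        ← map_mul]
      congr 2
      field_simp
    _ = _ := C_mul_egf _ _
  exact_mod_cast congrFun (egf_injective key) n

end ExponentialGeneratingFunctions

section GPoly

theorem gPoly_eq_sum_range (n r : ℕ) :
    gPoly n r =
      ∑ k ∈ Finset.range (n + 1), C ((n.choose k : ℝ) * lahNum k r) * lahPoly (n - k) := by
  refine Finset.sum_subset (fun k hk => ?_) (fun k hk hk' => ?_)
  · simp only [Finset.mem_Icc, Finset.mem_range] at hk ⊢
    omega
  · simp only [Finset.mem_Icc, Finset.mem_range] at hk hk'
    rw [lahNum_eq_zero_of_lt (by omega)]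
    simp

theorem gPoly_eq_C_mul_iterate_derivative (n r : ℕ) :
    gPoly n r = C (r ! : ℝ)⁻¹ * derivative^[r] (lahPoly n) := by
  ext j
  rw [gPoly_eq_sum_range, finsetSum_coeff, coeff_C_mul, coeff_iterate_derivative, lahPoly_coeff,
    Nat.descFactorial_eq_factorial_mul_choose, nsmul_eq_mul, add_comm j r, Nat.cast_mul, mul_assoc,
    inv_mul_cancel_left₀ (by positivity), ← Nat.cast_mul, ← lahNum_convolution]
  push_cast
  simp only [coeff_C_mul, lahPoly_coeff, mul_assoc]

theorem RZ_gPoly {n r : ℕ} (h : r ≤ n) : RZ (gPoly n r) := by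
  rw [gPoly_eq_C_mul_iterate_derivative]
  exact ((RZ_lahPoly n).iterate_derivative (by rwa [lahPoly_natDegree])).C_mul (by positivity)

theorem egf_eval_gPoly (r : ℕ) (x : ℝ) :
    egf (fun n => (gPoly n r).eval x)
      = PowerSeries.C (1 / r ! : ℝ) * tDivOneSubT ^ r * egf (fun m => (lahPoly m).eval x) := by
  rw [← egf_lahNum, egf_mul]
  congr! with n
  simp [gPoly_eq_sum_range, eval_finsetSum]

end GPoly

/-- For `r ≤ n` the polynomial `g_n^{(r)}` has only real zeros, and moreover its
exponential generating function is `(1/r!) (t/(1−t))^r exp(x t/(1−t))`, where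
`exp(x t/(1−t)) = ∑_m L_m(x) t^m/m!`. -/
theorem gPoly_lah_real_rooted_and_egf :
    (∀ n r : ℕ, r ≤ n → RZ (gPoly n r)) ∧
      ∀ (r : ℕ) (x : ℝ),
        (PowerSeries.mk fun n => (gPoly n r).eval x / (n.factorial : ℝ))
          = PowerSeries.C (R := ℝ) (1 / (r.factorial : ℝ)) * tDivOneSubT ^ r *
            PowerSeries.mk (fun m => (lahPoly m).eval x / (m.factorial : ℝ)) :=
  ⟨fun _ _ => RZ_gPoly, egf_eval_gPoly⟩
end
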